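/- Let f ∈ BV(ℤ) and let M be the discrete centered Hardy–Littlewood maximal operator. If n ∈ ℤ is not a global minimum of Mf (i.e., there exists m with Mf(m) < Mf(n)), then the supremum defining Mf(n) is attained: there exists a radius r_n ∈ ℤ, r_n ≥ 0, such that Mf(n) = (1/(2r_n+1)) Σ_{k=−r_n}^{r_n} |f(n+k)|. -/

import Mathlib

open MeasureTheory Filter Topology Set

/-- The centered discrete average of `|f|` at `n` with radius `r`. -/
noncomputable def Avg (f : ℤ → ℝ) (n : ℤ) (r : ℕ) : ℝ :=
  (2 * (r : ℝ) + 1)⁻¹ * ∑ k ∈ Finset.Icc (-(r : ℤ)) (r : ℤ), |f (n + k)|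

/-- The discrete centered Hardy–Littlewood maximal operator. -/
noncomputable def MD (f : ℤ → ℝ) (n : ℤ) : ℝ :=
  ⨆ r : ℕ, Avg f n r

/-- The total variation of a sequence `f : ℤ → ℝ`. -/
noncomputable def DVar (f : ℤ → ℝ) : ℝ :=
  ∑' n : ℤ, |f (n + 1) - f n|

/-- `f : ℤ → ℝ` has bounded variation (and a limit at `-∞`). -/
def DBV (f : ℤ → ℝ) : Prop :=
  Summable (fun n : ℤ => |f (n + 1) - f n|) ∧ ∃ L : ℝ, Tendsto f atBot (𝓝 L)

open scoped Finset

/-!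
Far from `n`, the averages of `|f|` at `n` and at any other point `m` differ by at most
`|n - m| ‖f‖_∞ / (2r + 1)`, so for large radii `Avg f n r` is at most `Mf(m) + o(1)`, which stays
below `Mf(n)` when `Mf(m) < Mf(n)`. The supremum defining `Mf(n)` is therefore a maximum over
finitely many radii, hence attained.
-/

theorem exists_eq_ciSup_of_eventually_le {α : Type*} [ConditionallyCompleteLinearOrder α]
    {a : ℕ → α} (hbdd : BddAbove (range a)) {c : α} (hc : c < ⨆ r, a r)
    (hev : ∀ᶠ r in atTop, a r ≤ c) : ∃ r, ⨆ i, a i = a r := by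
  obtain ⟨R, hR⟩ := eventually_atTop.mp hev
  obtain ⟨r₀, -, hr₀⟩ := (Finset.range (R + 1)).exists_max_image a ⟨0, by simp⟩
  have hsup : ⨆ i, a i ≤ max (a r₀) c := ciSup_le fun r ↦ by
    rcases le_or_gt R r with hRr | hrR
    · exact le_max_of_le_right (hR r hRr)
    · exact le_max_of_le_left (hr₀ r (Finset.mem_range.mpr (by omega)))
  exact ⟨r₀, le_antisymm ((le_max_iff.mp hsup).resolve_right hc.not_ge) (le_ciSup hbdd r₀)⟩

theorem Int.norm_sub_le_sum_Ico {E : Type*} [SeminormedAddCommGroup E] (f : ℤ → E) {m k : ℤ}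
    (hmk : m ≤ k) : ‖f k - f m‖ ≤ ∑ j ∈ Finset.Ico m k, ‖f (j + 1) - f j‖ := by
  induction k, hmk using Int.leInduction with
  | base => simp
  | succ k hmk ih =>
    have hIco : Finset.Ico m (k + 1) = insert k (Finset.Ico m k) := by
      ext j; simp only [Finset.mem_Ico, Finset.mem_insert]; omega
    rw [hIco, Finset.sum_insert (by simp)]
    linarith [norm_sub_le_norm_sub_add_norm_sub (f (k + 1)) (f k) (f m)]

theorem abs_sub_le_DVar {f : ℤ → ℝ} (hs : Summable fun n : ℤ ↦ |f (n + 1) - f n|) {m k : ℤ}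
    (hmk : m ≤ k) : |f k - f m| ≤ DVar f := by
  have h := Int.norm_sub_le_sum_Ico f hmk
  simp only [Real.norm_eq_abs] at h
  exact h.trans (hs.sum_le_tsum _ fun _ _ ↦ abs_nonneg _)

theorem DBV.exists_abs_le {f : ℤ → ℝ} (hf : DBV f) : ∃ C, ∀ k, |f k| ≤ C := by
  obtain ⟨hs, L, hL⟩ := hf
  refine ⟨|L| + DVar f, fun k ↦ ?_⟩
  have hk : |f k - L| ≤ DVar f :=
    le_of_tendsto (tendsto_const_nhds.sub hL).abs
      ((eventually_le_atBot k).mono fun _ hm ↦ abs_sub_le_DVar hs hm)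
  linarith [abs_sub_abs_le_abs_sub (f k) L]

theorem Finset.sum_le_sum_add_card_sdiff_nsmul {ι M : Type*} [DecidableEq ι] [AddCommMonoid M]
    [PartialOrder M] [IsOrderedAddMonoid M] {s t : Finset ι} {g : ι → M} {C : M}
    (hg : ∀ i ∈ t \ s, 0 ≤ g i) (hC : ∀ i ∈ s \ t, g i ≤ C) :
    ∑ i ∈ s, g i ≤ ∑ i ∈ t, g i + #(s \ t) • C := by
  rw [← sum_inter_add_sum_sdiff s t]
  refine add_le_add (sum_le_sum_of_subset_of_nonneg inter_subset_right fun i hit his ↦ ?_)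
    (sum_le_card_nsmul _ _ _ hC)
  exact hg i (mem_sdiff.mpr ⟨hit, fun hs ↦ his (mem_inter.mpr ⟨hs, hit⟩)⟩)

theorem Int.card_Icc_sdiff_Icc_le {a b c d : ℤ} (h : b - a = d - c) :
    #(Finset.Icc a b \ Finset.Icc c d) ≤ (a - c).natAbs := by
  have hsub : Finset.Icc a b \ Finset.Icc c d ⊆ Finset.Icc a (c - 1) ∪ Finset.Icc (d + 1) b := by
    intro j hj
    simp only [Finset.mem_sdiff, Finset.mem_Icc, Finset.mem_union] at hj ⊢
    omega
  have := (Finset.card_le_card hsub).trans (Finset.card_union_le _ _)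
  rw [Int.card_Icc, Int.card_Icc] at this
  omega

section Averages

variable {f : ℤ → ℝ} {C : ℝ}

theorem card_Icc_neg_natCast (r : ℕ) : (#(Finset.Icc (-(r : ℤ)) r) : ℝ) = 2 * r + 1 := by
  rw [Int.card_Icc, show ((r : ℤ) + 1 - -(r : ℤ)).toNat = 2 * r + 1 by omega]
  push_cast; ring

theorem Avg_eq_sum_Icc (f : ℤ → ℝ) (n : ℤ) (r : ℕ) :
    Avg f n r = (2 * (r : ℝ) + 1)⁻¹ * ∑ j ∈ Finset.Icc (n - r) (n + r), |f j| := by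
  rw [Avg]
  congr 1
  refine Finset.sum_nbij' (n + ·) (· - n) ?_ ?_ ?_ ?_ ?_ <;>
    simp +contextual only [Finset.mem_Icc, add_sub_cancel_left, add_sub_cancel,
      implies_true] <;> omega

theorem Avg_le (hC : ∀ k, |f k| ≤ C) (n : ℤ) (r : ℕ) : Avg f n r ≤ C := by
  have hsum := Finset.sum_le_card_nsmul (Finset.Icc (-(r : ℤ)) r) (fun k ↦ |f (n + k)|) C
    fun k _ ↦ hC _
  rw [nsmul_eq_mul, card_Icc_neg_natCast] at hsum
  rw [Avg, inv_mul_le_iff₀ (by positivity)]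
  exact hsum

theorem bddAbove_range_Avg (hC : ∀ k, |f k| ≤ C) (n : ℤ) : BddAbove (range (Avg f n)) :=
  ⟨C, forall_mem_range.mpr (Avg_le hC n)⟩

theorem Avg_le_Avg_add (hC : ∀ k, |f k| ≤ C) (n m : ℤ) (r : ℕ) :
    Avg f n r ≤ Avg f m r + (n - m).natAbs * C / (2 * r + 1) := by
  have hC0 : 0 ≤ C := (abs_nonneg _).trans (hC 0)
  have hsum := Finset.sum_le_sum_add_card_sdiff_nsmul (s := Finset.Icc (n - r) (n + r))
    (t := Finset.Icc (m - r) (m + r)) (g := fun j ↦ |f j|) (fun _ _ ↦ abs_nonneg _)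
    (fun _ _ ↦ hC _)
  have hcard : (#(Finset.Icc (n - r) (n + r) \ Finset.Icc (m - r) (m + r)) : ℝ) ≤
      (n - m).natAbs := by
    exact_mod_cast (Int.card_Icc_sdiff_Icc_le (by ring)).trans_eq (by congr 1; ring)
  rw [nsmul_eq_mul] at hsum
  rw [Avg_eq_sum_Icc, Avg_eq_sum_Icc, div_eq_inv_mul, ← mul_add]
  gcongr
  linarith [mul_le_mul_of_nonneg_right hcard hC0]

end Averages

theorem statement10
    (f : ℤ → ℝ) (hbv : DBV f) (n : ℤ)
    (h : ∃ m : ℤ, MD f m < MD f n) :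
    ∃ r : ℕ, MD f n = Avg f n r := by
  obtain ⟨m, hm⟩ := h
  obtain ⟨C, hC⟩ := hbv.exists_abs_le
  have hdecay : Tendsto (fun r : ℕ ↦ MD f m + (n - m).natAbs * C / (2 * r + 1)) atTop
      (𝓝 (MD f m)) := by
    simpa using tendsto_const_nhds.add <| tendsto_const_nhds.div_atTop <|
      tendsto_atTop_add_const_right _ 1 <|
        (tendsto_natCast_atTop_atTop (R := ℝ)).const_mul_atTop two_pos
  refine exists_eq_ciSup_of_eventually_le (bddAbove_range_Avg hC n)
    (c := (MD f m + MD f n) / 2) (by rw [← MD]; linarith) ?_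
  filter_upwards [hdecay.eventually (gt_mem_nhds (by linarith : MD f m < (MD f m + MD f n) / 2))]
    with r hr
  have hcompare := Avg_le_Avg_add hC n m r
  have hAvg_le_MD : Avg f m r ≤ MD f m := le_ciSup (bddAbove_range_Avg hC m) r
  linarith
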